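/- Let T be a 2-coloured triangulation of a convex polygon with k > 1 diagonals that can each be 2-coloured flipped and whose associated quadrilaterals are pairwise disjoint (sharing at most a diagonal). Then the connected component of T in the 2-coloured flip graph contains a subgraph isomorphic to the k-dimensional hypercube graph. -/

import Mathlib

namespace PolyFlip

/-- Two vertices of the convex `N`-gon are consecutive along the boundary. -/
def BdryAdj (N : ℕ) (i j : Fin N) : Prop :=
  (i.val + 1) % N = j.val ∨ (j.val + 1) % N = i.val

/-- `d` is a diagonal of the convex `N`-gon: an unordered pair of distinct,
non-consecutive vertices. -/
def IsDiag (N : ℕ) (d : Finset (Fin N)) : Prop :=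
  ∃ i j : Fin N, i ≠ j ∧ ¬ BdryAdj N i j ∧ d = {i, j}

/-- The chord `d` crosses the chord `e` (in this orientation): the endpoints
interlace in the cyclic (here: linear) order of the polygon's vertices. -/
def Crosses {N : ℕ} (d e : Finset (Fin N)) : Prop :=
  ∃ a b c f : Fin N, d = {a, b} ∧ e = {c, f} ∧ a < c ∧ c < b ∧ b < f

/-- A triangulation of the convex `N`-gon: a maximal set of pairwise
non-crossing diagonals. -/
structure Triangulation (N : ℕ) where
  diags : Finset (Finset (Fin N))
  isDiag : ∀ d ∈ diags, IsDiag N d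
  noncross : ∀ d ∈ diags, ∀ e ∈ diags, ¬ Crosses d e
  maximal : ∀ d, IsDiag N d → (∀ e ∈ diags, ¬ Crosses d e ∧ ¬ Crosses e d) → d ∈ diags

/-- `a` and `b` are joined by an edge of the triangulated polygon:
either a boundary edge, or a diagonal of the triangulation. -/
def IsEdge {N : ℕ} (T : Triangulation N) (a b : Fin N) : Prop :=
  a ≠ b ∧ (BdryAdj N a b ∨ ({a, b} : Finset (Fin N)) ∈ T.diags)

/-- `t` is a triangle (face) of the triangulation `T`. -/
def IsTriangle {N : ℕ} (T : Triangulation N) (t : Finset (Fin N)) : Prop :=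
  ∃ a b c : Fin N, a ≠ b ∧ a ≠ c ∧ b ≠ c ∧ t = {a, b, c} ∧
    IsEdge T a b ∧ IsEdge T a c ∧ IsEdge T b c

/-- A coloured triangulation: a triangulation together with a colour in
`Fin m` for each of its triangles. -/
structure ColouredTri (N m : ℕ) where
  T : Triangulation N
  col : {t : Finset (Fin N) // IsTriangle T t} → Fin m

/-- The degree of a vertex `x` in the triangulated polygon. -/
noncomputable def degree {N : ℕ} (T : Triangulation N) (x : Fin N) : ℕ :=
  Nat.card {y : Fin N // IsEdge T x y}

/-- The `σ`-flip at the diagonal `d`: `d = {a,b}` is a diagonal of `C` whose two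
incident triangles `{a,b,x}` and `{a,b,y}` have the same colour `i`; it is replaced by
the other diagonal `{x,y}` of the quadrilateral, the two new triangles `{a,x,y}` and
`{b,x,y}` get colour `σ i`, and all other triangles keep their colours. -/
def SFlipAt {N m : ℕ} (σ : Equiv.Perm (Fin m)) (d : Finset (Fin N))
    (C C' : ColouredTri N m) : Prop :=
  ∃ (a b x y : Fin N) (h₁ : IsTriangle C.T {a, b, x}) (h₂ : IsTriangle C.T {a, b, y})
    (h₁' : IsTriangle C'.T {a, x, y}) (h₂' : IsTriangle C'.T {b, x, y}),
    d = {a, b} ∧ d ∈ C.T.diags ∧ x ≠ y ∧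
    C.col ⟨{a, b, x}, h₁⟩ = C.col ⟨{a, b, y}, h₂⟩ ∧
    C'.T.diags = insert {x, y} (C.T.diags.erase d) ∧
    C'.col ⟨{a, x, y}, h₁'⟩ = σ (C.col ⟨{a, b, x}, h₁⟩) ∧
    C'.col ⟨{b, x, y}, h₂'⟩ = σ (C.col ⟨{a, b, x}, h₁⟩) ∧
    ∀ (t : Finset (Fin N)) (ht : IsTriangle C.T t) (ht' : IsTriangle C'.T t),
      t ≠ {a, b, x} → t ≠ {a, b, y} → C'.col ⟨t, ht'⟩ = C.col ⟨t, ht⟩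

/-- The `σ`-flip relation. -/
def SFlip {N m : ℕ} (σ : Equiv.Perm (Fin m)) (C C' : ColouredTri N m) : Prop :=
  ∃ d, SFlipAt σ d C C'

/-- The 2-coloured flip at a diagonal (the colour permutation swaps the two colours). -/
abbrev Flip2At {N : ℕ} (d : Finset (Fin N)) (C C' : ColouredTri N 2) : Prop :=
  SFlipAt (finRotate 2) d C C'

/-- The 2-coloured flip relation. -/
abbrev Flip2 {N : ℕ} (C C' : ColouredTri N 2) : Prop :=
  SFlip (finRotate 2) C C'

/-- The 2-coloured flip graph of the convex `N`-gon: vertices are the 2-coloured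
triangulations, edges are single 2-coloured flips. -/
def flipGraph (N : ℕ) : SimpleGraph (ColouredTri N 2) where
  Adj C C' := C ≠ C' ∧ (Flip2 C C' ∨ Flip2 C' C)
  symm := ⟨fun C C' h => ⟨h.1.symm, h.2.symm⟩⟩
  loopless := ⟨fun C h => h.1 rfl⟩

/-- The sign (`+1` for colour `0`, `-1` for colour `1`) of a colour, in `ZMod 3`. -/
def signVal (c : Fin 2) : ZMod 3 := if c = 0 then 1 else -1

/-- The weight of a vertex `x`: the sum, modulo 3, of the signs of all triangles
incident with `x`. -/
noncomputable def weight {N : ℕ} (C : ColouredTri N 2) (x : Fin N) : ZMod 3 :=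
  ∑ᶠ t : {t : Finset (Fin N) // IsTriangle C.T t},
    if x ∈ t.val then signVal (C.col t) else 0

/-- The number of triangles coloured `+1` (colour `0`). -/
noncomputable def plusCount {N : ℕ} (C : ColouredTri N 2) : ℕ :=
  Nat.card {t : {t : Finset (Fin N) // IsTriangle C.T t} // C.col t = 0}

/-- Adjacency in the `k`-dimensional hypercube: the two vertices differ in
exactly one coordinate. -/
def cubeAdj (k : ℕ) (u v : Fin k → Bool) : Prop := ∃! i, u i ≠ v i

/-- The `k`-dimensional hypercube graph on `{0,1}^k`. -/
def cubeGraph (k : ℕ) : SimpleGraph (Fin k → Bool) where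
  Adj := cubeAdj k
  symm := by
    refine ⟨?_⟩
    rintro u v ⟨i, hi, hu⟩
    exact ⟨i, hi.symm, fun j hj => hu j hj.symm⟩
  loopless := by
    refine ⟨?_⟩
    rintro u ⟨i, hi, -⟩
    exact hi rfl

/-- `f` exhibits a `k`-dimensional hypercube inside the connected component of `C`
in the 2-coloured flip graph. -/
def CubeEmb {N : ℕ} (C : ColouredTri N 2) (k : ℕ)
    (f : (Fin k → Bool) → ColouredTri N 2) : Prop :=
  Function.Injective f ∧
  (∀ u v, cubeAdj k u v → (flipGraph N).Adj (f u) (f v)) ∧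
  ∀ u, (flipGraph N).Reachable C (f u)

/-- `G` contains a subdivision (topological copy) of `H`: there are branch vertices
`f w` for the vertices `w` of `H` and internally disjoint paths in `G` between them
realising the edges of `H`. -/
def ContainsSubdivision {V W : Type*} (G : SimpleGraph V) (H : SimpleGraph W) : Prop :=
  ∃ f : W → V, Function.Injective f ∧
    ∃ P : ∀ u v : W, H.Adj u v → G.Walk (f u) (f v),
      (∀ u v (h : H.Adj u v), (P u v h).IsPath) ∧
      (∀ u v (h : H.Adj u v) (w : W), f w ∈ (P u v h).support → w = u ∨ w = v) ∧
      (∀ u₁ v₁ (h₁ : H.Adj u₁ v₁) u₂ v₂ (h₂ : H.Adj u₂ v₂),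
        (s(u₁, v₁) : Sym2 W) ≠ s(u₂, v₂) →
        ∀ x, x ∈ (P u₁ v₁ h₁).support → x ∈ (P u₂ v₂ h₂).support →
          (x = f u₁ ∨ x = f v₁) ∧ (x = f u₂ ∨ x = f v₂))

/-- Planarity, via Kuratowski's characterisation: a graph is planar iff it contains
no subdivision of `K₅` and no subdivision of `K₃,₃`. -/
def IsPlanar {V : Type*} (G : SimpleGraph V) : Prop :=
  ¬ ContainsSubdivision G (SimpleGraph.completeGraph (Fin 5)) ∧
  ¬ ContainsSubdivision G (completeBipartiteGraph (Fin 3) (Fin 3))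

/-!
Label each flippable quadrilateral as `a < x < b` with `y` outside `[a, b]`, its diagonal `ab`
and triangles `abx`, `aby`. For `u : {0,1}^k` flip exactly the quadrilaterals with `u i = 1`.
Two quadrilaterals share at most two vertices, so no side of one is the diagonal of another: the
sides survive every flip, and in a convex quadrilateral whose sides are edges the only chord
crossing one diagonal is the other one. Hence the flipped diagonal set is again a maximal
non-crossing set, and changing one coordinate of `u` is a single 2-coloured flip (the colours of
the untouched quadrilaterals do not change). The map is injective, since `u i = 1` iff `xy` is a
diagonal, and the hypercube is connected, so its image lies in the component of `u = 0`, i.e. of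
`C`.
-/

end PolyFlip

theorem Finset.pair_eq_pair_iff {α : Type*} [DecidableEq α] {a b c d : α} :
    ({a, b} : Finset α) = {c, d} ↔ a = c ∧ b = d ∨ a = d ∧ b = c := by
  rw [← Finset.coe_inj]
  push_cast
  exact Set.pair_eq_pair_iff

theorem Finset.eq_and_eq_of_pair_eq_pair {α : Type*} [LinearOrder α] {a b c d : α}
    (h : ({a, b} : Finset α) = {c, d}) (hab : a < b) (hcd : c < d) : a = c ∧ b = d :=
  (Finset.pair_eq_pair_iff.1 h).resolve_right fun ⟨had, hbc⟩ =>
    (hab.trans (hbc ▸ had ▸ hcd)).false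

namespace PolyFlip

open Finset

variable {N : ℕ}

section Chords

variable {a b p q r s w x y z : Fin N} {d e : Finset (Fin N)}

/-- `Crosses` is oriented; two chords meet in the interior of the polygon iff they are
interlaced. -/
def Interlaced (d e : Finset (Fin N)) : Prop := Crosses d e ∨ Crosses e d

theorem interlaced_comm : Interlaced d e ↔ Interlaced e d := or_comm

theorem crosses_of_lt (h₁ : p < q) (h₂ : q < r) (h₃ : r < s) : Crosses {p, r} {q, s} :=
  ⟨p, r, q, s, rfl, rfl, h₁, h₂, h₃⟩

theorem interlaced_of_lt_of_lt (hpw : p < w) (hwq : w < q) (hz : z < p ∨ q < z) :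
    Interlaced {w, z} {p, q} := by
  rcases hz with hz | hz
  · left
    rw [pair_comm]
    exact crosses_of_lt hz hpw hwq
  · exact Or.inr (crosses_of_lt hpw hwq hz)

theorem Interlaced.exists_lt_of_lt (h : Interlaced e {a, b}) (hab : a < b) :
    ∃ w z, e = {w, z} ∧ a < w ∧ w < b ∧ (z < a ∨ b < z) := by
  rcases h with ⟨p, q, r, s, rfl, hab', h₁, h₂, h₃⟩ | ⟨p, q, r, s, hab', rfl, h₁, h₂, h₃⟩
  · obtain ⟨rfl, rfl⟩ := eq_and_eq_of_pair_eq_pair hab' hab (h₂.trans h₃)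
    exact ⟨q, p, pair_comm _ _, h₂, h₃, Or.inl h₁⟩
  · obtain ⟨rfl, rfl⟩ := eq_and_eq_of_pair_eq_pair hab' hab (h₁.trans h₂)
    exact ⟨r, s, rfl, h₁, h₂, Or.inr h₃⟩

theorem not_interlaced_self (d : Finset (Fin N)) : ¬ Interlaced d d := by
  suffices ¬ Crosses d d from fun h => h.elim this this
  rintro ⟨p, q, r, s, rfl, hd, h₁, h₂, h₃⟩
  exact h₁.ne (eq_and_eq_of_pair_eq_pair hd (h₁.trans h₂) (h₂.trans h₃)).1

theorem BdryAdj.val_eq {i j : Fin N} (h : BdryAdj N i j) :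
    i.val + 1 = j.val ∨ j.val + 1 = i.val ∨
      (i.val + 1 = N ∧ j.val = 0) ∨ (j.val + 1 = N ∧ i.val = 0) := by
  have succ_mod : ∀ m n : Fin N, (m.val + 1) % N = n.val →
      m.val + 1 = n.val ∨ (m.val + 1 = N ∧ n.val = 0) := by
    intro m n hmn
    rcases (Nat.succ_le_of_lt m.isLt).lt_or_eq with hlt | heq
    · rw [Nat.mod_eq_of_lt hlt] at hmn
      exact Or.inl hmn
    · rw [show m.val + 1 = N from heq, Nat.mod_self] at hmn
      exact Or.inr ⟨heq, hmn.symm⟩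
  rcases h with h | h <;> rcases succ_mod _ _ h with h' | h' <;> tauto

/-- A boundary edge of the polygon leaves no vertex on one of its two sides. -/
theorem BdryAdj.not_interlaced (h : BdryAdj N a b) (e : Finset (Fin N)) :
    ¬ Interlaced {a, b} e := by
  have hv := h.val_eq
  rintro (⟨p, q, r, s, hd, -, h₁, h₂, h₃⟩ | ⟨p, q, r, s, -, hd, h₁, h₂, h₃⟩) <;>
    rw [Finset.pair_eq_pair_iff] at hd <;>
    rcases hd with ⟨rfl, rfl⟩ | ⟨rfl, rfl⟩ <;>
    simp only [Fin.lt_def] at h₁ h₂ h₃ <;> omega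

theorem eq_of_interlaced_of_not_interlaced_sides (hax : a < x) (hxb : x < b)
    (hy : y < a ∨ b < y) (he : Interlaced e {a, b}) (s₁ : ¬ Interlaced e {a, x})
    (s₂ : ¬ Interlaced e {x, b}) (s₃ : ¬ Interlaced e {a, y}) (s₄ : ¬ Interlaced e {b, y}) :
    e = {x, y} := by
  obtain ⟨w, z, rfl, haw, hwb, hz⟩ := he.exists_lt_of_lt (hax.trans hxb)
  obtain rfl : w = x := by
    rcases lt_trichotomy w x with h | h | h
    · exact absurd (interlaced_of_lt_of_lt haw h (hz.imp id hxb.trans)) s₁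
    · exact h
    · exact absurd (interlaced_of_lt_of_lt h hwb (hz.imp hax.trans' id)) s₂
  obtain rfl : z = y := by
    by_contra hzy
    rw [pair_comm b y] at s₄
    rcases hz with hz | hz <;> rcases hy with hy | hy
    · rcases lt_or_gt_of_ne hzy with h | h
      · exact s₄ (interlaced_of_lt_of_lt (hy.trans hax) hxb (Or.inl h))
      · rw [pair_comm a y, pair_comm w z] at s₃
        exact s₃ (interlaced_of_lt_of_lt h hz (Or.inr hax))
    · exact s₃ (interlaced_of_lt_of_lt hax (hxb.trans hy) (Or.inl hz))
    · exact s₄ (interlaced_of_lt_of_lt (hy.trans hax) hxb (Or.inr hz))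
    · rcases lt_or_gt_of_ne hzy with h | h
      · rw [pair_comm y b, pair_comm w z] at s₄
        exact s₄ (interlaced_of_lt_of_lt hz h (Or.inl hxb))
      · exact s₃ (interlaced_of_lt_of_lt hax (hxb.trans hy) (Or.inr h))
  rfl

end Chords

section Triangulation

variable {T : Triangulation N} {a b p q r s u v w : Fin N} {t : Finset (Fin N)}

theorem IsEdge.symm (h : IsEdge T p q) : IsEdge T q p :=
  ⟨h.1.symm, h.2.imp Or.symm fun h => by rwa [pair_comm]⟩

theorem IsTriangle.isEdge (h : IsTriangle T t) (hp : p ∈ t) (hq : q ∈ t) (hpq : p ≠ q) :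
    IsEdge T p q := by
  obtain ⟨a, b, c, -, -, -, rfl, hab, hac, hbc⟩ := h
  simp only [mem_insert, mem_singleton] at hp hq
  rcases hp with rfl | rfl | rfl <;> rcases hq with rfl | rfl | rfl <;>
    first | exact absurd rfl hpq | assumption | exact IsEdge.symm ‹_›

theorem IsTriangle.card_eq_three (h : IsTriangle T t) : t.card = 3 := by
  obtain ⟨a, b, c, hab, hac, hbc, rfl, -⟩ := h
  simp [hab, hac, hbc]

theorem IsEdge.not_crosses (h₁ : IsEdge T p q) (h₂ : IsEdge T r s) :
    ¬ Crosses {p, q} {r, s} := fun h => by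
  rcases h₁.2 with hb | hd
  · exact hb.not_interlaced _ (Or.inl h)
  rcases h₂.2 with hb | hd'
  · exact hb.not_interlaced _ (Or.inr h)
  exact T.noncross _ hd _ hd' h

theorem IsEdge.not_interlaced (h₁ : IsEdge T p q) (h₂ : IsEdge T r s) :
    ¬ Interlaced {p, q} {r, s} :=
  fun h => h.elim (h₁.not_crosses h₂) (h₂.not_crosses h₁)

theorem eq_of_isEdge_of_inside (hau : IsEdge T a u) (hbu : IsEdge T b u)
    (hav : IsEdge T a v) (hbv : IsEdge T b v) (hu : a < u ∧ u < b) (hv : a < v ∧ v < b) :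
    u = v := by
  rcases lt_trichotomy u v with h | h | h
  · exact absurd (crosses_of_lt hu.1 h hv.2) (hav.not_crosses hbu.symm)
  · exact h
  · exact absurd (crosses_of_lt hv.1 h hu.2) (hau.not_crosses hbv.symm)

theorem eq_of_isEdge_of_outside (hab : a < b) (hau : IsEdge T a u) (hbu : IsEdge T b u)
    (hav : IsEdge T a v) (hbv : IsEdge T b v) (hu : u < a ∨ b < u) (hv : v < a ∨ b < v) :
    u = v := by
  rcases lt_trichotomy u v with h | h | h
  · exfalso
    rcases hu with hu | hu <;> rcases hv with hv | hv
    · exact hau.symm.not_crosses hbv.symm (crosses_of_lt h hv hab)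
    · exact hbu.symm.not_crosses hav (crosses_of_lt hu hab hv)
    · exact lt_asymm (hu.trans h) (hv.trans hab)
    · exact hau.not_crosses hbv (crosses_of_lt hab hu h)
  · exact h
  · exfalso
    rcases hu with hu | hu <;> rcases hv with hv | hv
    · exact hav.symm.not_crosses hbu.symm (crosses_of_lt h hu hab)
    · exact lt_asymm (hv.trans h) (hu.trans hab)
    · exact hbv.symm.not_crosses hau (crosses_of_lt hv hab hu)
    · exact hav.not_crosses hbu (crosses_of_lt hab hv h)

theorem ColouredTri.ext_of_diags {m : ℕ} {C₁ C₂ : ColouredTri N m}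
    (hT : C₁.T.diags = C₂.T.diags)
    (hcol : ∀ t h₁ h₂, C₁.col ⟨t, h₁⟩ = C₂.col ⟨t, h₂⟩) : C₁ = C₂ := by
  obtain ⟨⟨d₁, _, _, _⟩, c₁⟩ := C₁
  obtain ⟨⟨d₂, _, _, _⟩, c₂⟩ := C₂
  subst hT
  congr
  funext ⟨t, h⟩
  exact hcol t h h

theorem ColouredTri.col_congr {m : ℕ} (C : ColouredTri N m) {s t : Finset (Fin N)} (h : s = t)
    (hs : IsTriangle C.T s) (ht : IsTriangle C.T t) : C.col ⟨s, hs⟩ = C.col ⟨t, ht⟩ := by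
  subst h
  rfl

end Triangulation

theorem cubeGraph_reachable {k : ℕ} (u v : Fin k → Bool) : (cubeGraph k).Reachable u v := by
  suffices ∀ s : Finset (Fin k), ∀ u, (∀ i, u i ≠ v i → i ∈ s) → (cubeGraph k).Reachable u v from
    this univ u fun i _ => mem_univ i
  intro s
  induction s using Finset.induction_on with
  | empty =>
    intro u hu
    obtain rfl : u = v := funext fun i => by_contra fun h => by simpa using hu i h
    rfl
  | insert i s _ ih =>
    intro u hu
    have hw : ∀ j, Function.update u i (v i) j ≠ v j → j ∈ s := by
      intro j hj
      rcases eq_or_ne j i with rfl | hji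
      · simp at hj
      · rw [Function.update_of_ne hji] at hj
        exact (mem_insert.1 (hu j hj)).resolve_left hji
    by_cases hui : u i = v i
    · rw [Function.update_eq_self_iff.2 hui.symm] at hw
      exact ih u hw
    refine SimpleGraph.Reachable.trans (SimpleGraph.Adj.reachable ?_) (ih _ hw)
    refine ⟨i, by simpa using hui, fun j hj => by_contra fun hji => ?_⟩
    simp [Function.update_of_ne hji] at hj

/-- Labelling the apexes by their position relative to `ab` turns every crossing argument about
the quadrilateral into a comparison in the linear order of the vertices. -/
structure Quad (T : Triangulation N) where
  a : Fin N
  b : Fin N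
  x : Fin N
  y : Fin N
  a_lt_x : a < x
  x_lt_b : x < b
  y_lt_or_lt : y < a ∨ b < y
  diag_mem : {a, b} ∈ T.diags
  isTriangle_abx : IsTriangle T {a, b, x}
  isTriangle_aby : IsTriangle T {a, b, y}

namespace Quad

variable {T : Triangulation N} (q : Quad T) {e t : Finset (Fin N)} {p r w : Fin N}

def verts : Finset (Fin N) := {q.a, q.b, q.x, q.y}

def sides : Finset (Finset (Fin N)) := {{q.a, q.x}, {q.x, q.b}, {q.a, q.y}, {q.b, q.y}}

theorem a_lt_b : q.a < q.b := q.a_lt_x.trans q.x_lt_b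

theorem y_ne_a : q.y ≠ q.a := by
  rcases q.y_lt_or_lt with h | h
  · exact h.ne
  · exact (q.a_lt_b.trans h).ne'

theorem y_ne_b : q.y ≠ q.b := by
  rcases q.y_lt_or_lt with h | h
  · exact (h.trans q.a_lt_b).ne
  · exact h.ne'

theorem x_ne_y : q.x ≠ q.y := by
  rcases q.y_lt_or_lt with h | h
  · exact (h.trans q.a_lt_x).ne'
  · exact (q.x_lt_b.trans h).ne

theorem isEdge_ab : IsEdge T q.a q.b := ⟨q.a_lt_b.ne, Or.inr q.diag_mem⟩
theorem isEdge_ax : IsEdge T q.a q.x := q.isTriangle_abx.isEdge (by simp) (by simp) q.a_lt_x.ne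
theorem isEdge_bx : IsEdge T q.b q.x := q.isTriangle_abx.isEdge (by simp) (by simp) q.x_lt_b.ne'
theorem isEdge_ay : IsEdge T q.a q.y := q.isTriangle_aby.isEdge (by simp) (by simp) q.y_ne_a.symm
theorem isEdge_by : IsEdge T q.b q.y := q.isTriangle_aby.isEdge (by simp) (by simp) q.y_ne_b.symm

theorem interlaced_xy_ab : Interlaced {q.x, q.y} {q.a, q.b} :=
  interlaced_of_lt_of_lt q.a_lt_x q.x_lt_b q.y_lt_or_lt

theorem not_isEdge_xy : ¬ IsEdge T q.x q.y := fun h =>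
  h.not_interlaced q.isEdge_ab q.interlaced_xy_ab

theorem xy_not_mem_diags : {q.x, q.y} ∉ T.diags := fun h => q.not_isEdge_xy ⟨q.x_ne_y, Or.inr h⟩

theorem isDiag_xy : IsDiag N {q.x, q.y} :=
  ⟨q.x, q.y, q.x_ne_y, fun h => q.not_isEdge_xy ⟨q.x_ne_y, Or.inl h⟩, rfl⟩

theorem eq_x_or_eq_y (haw : IsEdge T q.a w) (hbw : IsEdge T q.b w) (hwa : w ≠ q.a)
    (hwb : w ≠ q.b) : w = q.x ∨ w = q.y := by
  rcases lt_or_gt_of_ne hwa with h | h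
  · exact Or.inr (eq_of_isEdge_of_outside q.a_lt_b haw hbw q.isEdge_ay q.isEdge_by
      (Or.inl h) q.y_lt_or_lt)
  rcases lt_or_gt_of_ne hwb with h' | h'
  · exact Or.inl (eq_of_isEdge_of_inside haw hbw q.isEdge_ax q.isEdge_bx ⟨h, h'⟩
      ⟨q.a_lt_x, q.x_lt_b⟩)
  · exact Or.inr (eq_of_isEdge_of_outside q.a_lt_b haw hbw q.isEdge_ay q.isEdge_by
      (Or.inr h') q.y_lt_or_lt)

theorem subset_verts_of_isTriangle (ht : IsTriangle T t) (hab : {q.a, q.b} ⊆ t) :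
    t ⊆ q.verts := by
  have ha : q.a ∈ t := hab (by simp)
  have hb : q.b ∈ t := hab (by simp)
  intro w hw
  by_cases hwa : w = q.a
  · simp [verts, hwa]
  by_cases hwb : w = q.b
  · simp [verts, hwb]
  rcases q.eq_x_or_eq_y (ht.isEdge ha hw (Ne.symm hwa)) (ht.isEdge hb hw (Ne.symm hwb)) hwa hwb
    with rfl | rfl <;> simp [verts]

theorem abx_subset_verts : {q.a, q.b, q.x} ⊆ q.verts := by
  intro; simp only [verts, mem_insert, mem_singleton]; tauto

theorem aby_subset_verts : {q.a, q.b, q.y} ⊆ q.verts := by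
  intro; simp only [verts, mem_insert, mem_singleton]; tauto

theorem exists_isTriangle_of_mem_sides (he : e ∈ q.sides) :
    ∃ p r t, e = {p, r} ∧ p ≠ r ∧ IsTriangle T t ∧ p ∈ t ∧ r ∈ t ∧ t ⊆ q.verts := by
  have habx := q.abx_subset_verts
  have haby := q.aby_subset_verts
  simp only [sides, mem_insert, mem_singleton] at he
  rcases he with rfl | rfl | rfl | rfl
  · exact ⟨_, _, _, rfl, q.a_lt_x.ne, q.isTriangle_abx, by simp, by simp, habx⟩
  · exact ⟨_, _, _, rfl, q.x_lt_b.ne, q.isTriangle_abx, by simp, by simp, habx⟩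
  · exact ⟨_, _, _, rfl, q.y_ne_a.symm, q.isTriangle_aby, by simp, by simp, haby⟩
  · exact ⟨_, _, _, rfl, q.y_ne_b.symm, q.isTriangle_aby, by simp, by simp, haby⟩

theorem diag_not_mem_sides : {q.a, q.b} ∉ q.sides := by
  have := q.a_lt_b
  have := q.a_lt_x
  have := q.x_lt_b
  have := q.y_ne_a
  have := q.y_ne_b
  simp only [sides, mem_insert, mem_singleton, Finset.pair_eq_pair_iff]
  omega

theorem eq_xy_of_interlaced_ab (he : Interlaced e {q.a, q.b})
    (hs : ∀ s ∈ q.sides, ¬ Interlaced e s) : e = {q.x, q.y} :=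
  eq_of_interlaced_of_not_interlaced_sides q.a_lt_x q.x_lt_b q.y_lt_or_lt he
    (hs _ (by simp [sides])) (hs _ (by simp [sides])) (hs _ (by simp [sides]))
    (hs _ (by simp [sides]))

theorem eq_ab_of_interlaced_xy (he : Interlaced e {q.x, q.y})
    (hs : ∀ s ∈ q.sides, ¬ Interlaced e s) : e = {q.a, q.b} := by
  have s₁ := hs {q.a, q.x} (by simp [sides])
  have s₂ := hs {q.x, q.b} (by simp [sides])
  have s₃ := hs {q.a, q.y} (by simp [sides])
  have s₄ := hs {q.b, q.y} (by simp [sides])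
  rcases q.y_lt_or_lt with h | h
  · rw [pair_comm q.x q.y] at he
    rw [pair_comm q.a q.y] at s₃
    rw [pair_comm q.b q.y] at s₄
    exact eq_of_interlaced_of_not_interlaced_sides (x := q.a) (y := q.b) h q.a_lt_x
      (Or.inr q.x_lt_b) he s₃ s₁ s₄ s₂
  · rw [pair_comm q.a q.x] at s₁
    rw [pair_comm q.a q.y] at s₃
    rw [pair_comm q.a q.b]
    exact eq_of_interlaced_of_not_interlaced_sides (x := q.b) (y := q.a) q.x_lt_b h
      (Or.inl q.a_lt_x) he s₂ s₄ s₁ s₃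

theorem not_interlaced_sides_of_isEdge (h : IsEdge T p r) :
    ∀ s ∈ q.sides, ¬ Interlaced {p, r} s := by
  intro s hs
  obtain ⟨p', r', t, rfl, hpr, ht, hp, hr, -⟩ := q.exists_isTriangle_of_mem_sides hs
  exact h.not_interlaced (ht.isEdge hp hr hpr)

theorem eq_ab_of_isEdge_of_interlaced_xy (h : IsEdge T p r)
    (hc : Interlaced {p, r} {q.x, q.y}) : ({p, r} : Finset (Fin N)) = {q.a, q.b} :=
  q.eq_ab_of_interlaced_xy hc (q.not_interlaced_sides_of_isEdge h)

def IsNew (t : Finset (Fin N)) : Prop := t = {q.a, q.x, q.y} ∨ t = {q.b, q.x, q.y}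

theorem IsNew.subset_verts (h : q.IsNew t) : t ⊆ q.verts := by
  rcases h with rfl | rfl <;> intro <;> simp only [verts, mem_insert, mem_singleton] <;> tauto

theorem IsNew.card_eq_three (h : q.IsNew t) : t.card = 3 := by
  rcases h with rfl | rfl <;>
    simp [q.a_lt_x.ne, q.x_lt_b.ne', q.x_ne_y, q.y_ne_a.symm, q.y_ne_b.symm]

theorem not_isNew_of_diag_subset (h : {q.a, q.b} ⊆ t) : ¬ q.IsNew t := by
  have ha : q.a ∈ t := h (by simp)
  have hb : q.b ∈ t := h (by simp)
  rintro (rfl | rfl)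
  · simp only [mem_insert, mem_singleton] at hb
    rcases hb with hb | hb | hb
    · exact q.a_lt_b.ne' hb
    · exact q.x_lt_b.ne' hb
    · exact q.y_ne_b hb.symm
  · simp only [mem_insert, mem_singleton] at ha
    rcases ha with ha | ha | ha
    · exact q.a_lt_b.ne ha
    · exact q.a_lt_x.ne ha
    · exact q.y_ne_a ha.symm

theorem exists_of_isTriangle {d t₁ t₂ : Finset (Fin N)} (hd : d ∈ T.diags)
    (h₁ : IsTriangle T t₁) (h₂ : IsTriangle T t₂) (hd₁ : d ⊆ t₁) (hd₂ : d ⊆ t₂)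
    (hne : t₁ ≠ t₂) :
    ∃ q : Quad T, q.verts = t₁ ∪ t₂ ∧
      (t₁ = {q.a, q.b, q.x} ∧ t₂ = {q.a, q.b, q.y} ∨
        t₁ = {q.a, q.b, q.y} ∧ t₂ = {q.a, q.b, q.x}) := by
  obtain ⟨a, b, hab, rfl⟩ : ∃ a b, a < b ∧ d = {a, b} := by
    obtain ⟨p, r, hpr, -, rfl⟩ := T.isDiag d hd
    rcases lt_or_gt_of_ne hpr with h | h
    · exact ⟨p, r, h, rfl⟩
    · exact ⟨r, p, h, pair_comm _ _⟩
  have apex : ∀ t, IsTriangle T t → {a, b} ⊆ t → ∃ w, t = {a, b, w} ∧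
      ((a < w ∧ w < b) ∨ (w < a ∨ b < w)) ∧ IsEdge T a w ∧ IsEdge T b w := by
    intro t ht hsub
    obtain ⟨w, hw, rfl⟩ := exists_eq_insert_iff.2
      ⟨hsub, by rw [ht.card_eq_three, card_pair hab.ne]⟩
    simp only [mem_insert, mem_singleton, not_or] at hw
    refine ⟨w, by ext; simp; tauto, by omega, ht.isEdge (by simp) (by simp) (Ne.symm hw.1),
      ht.isEdge (by simp) (by simp) (Ne.symm hw.2)⟩
  obtain ⟨u, rfl, hu, hau, hbu⟩ := apex t₁ h₁ hd₁
  obtain ⟨v, rfl, hv, hav, hbv⟩ := apex t₂ h₂ hd₂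
  have huv : u ≠ v := by rintro rfl; exact hne rfl
  have hverts : ∀ p r : Fin N, ({a, b, p, r} : Finset (Fin N)) = {a, b, p} ∪ {a, b, r} := by
    intro p r; ext; simp
  rcases hu with hu | hu <;> rcases hv with hv | hv
  · exact absurd (eq_of_isEdge_of_inside hau hbu hav hbv hu hv) huv
  · exact ⟨⟨a, b, u, v, hu.1, hu.2, hv, hd, h₁, h₂⟩, hverts u v, Or.inl ⟨rfl, rfl⟩⟩
  · exact ⟨⟨a, b, v, u, hv.1, hv.2, hu, hd, h₂, h₁⟩, (hverts v u).trans (union_comm _ _),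
      Or.inr ⟨rfl, rfl⟩⟩
  · exact absurd (eq_of_isEdge_of_outside hab hau hbu hav hbv hu hv) huv

end Quad

structure DisjointQuads {m : ℕ} (C : ColouredTri N m) (k : ℕ) where
  quad : Fin k → Quad C.T
  col_eq : ∀ i, C.col ⟨_, (quad i).isTriangle_abx⟩ = C.col ⟨_, (quad i).isTriangle_aby⟩
  card_inter_le : ∀ i j, i ≠ j → ((quad i).verts ∩ (quad j).verts).card ≤ 2

namespace DisjointQuads

variable {m k : ℕ} {C : ColouredTri N m} (F : DisjointQuads C k) {i j : Fin k}
  {e t : Finset (Fin N)} {u : Fin k → Bool} {p r : Fin N}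

theorem eq_of_subset_verts (ht : t.card = 3) (hi : t ⊆ (F.quad i).verts)
    (hj : t ⊆ (F.quad j).verts) : i = j := by
  by_contra hij
  have := card_le_card (subset_inter hi hj)
  have := F.card_inter_le i j hij
  omega

theorem eq_of_diag_subset (ht : IsTriangle C.T t) (hti : t ⊆ (F.quad i).verts)
    (hjt : {(F.quad j).a, (F.quad j).b} ⊆ t) : i = j :=
  F.eq_of_subset_verts ht.card_eq_three hti ((F.quad j).subset_verts_of_isTriangle ht hjt)

theorem eq_of_diag_eq
    (h : ({(F.quad i).a, (F.quad i).b} : Finset (Fin N)) = {(F.quad j).a, (F.quad j).b}) :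
    i = j :=
  F.eq_of_diag_subset (F.quad i).isTriangle_abx (F.quad i).abx_subset_verts
    (h ▸ by simp [insert_subset_iff])

theorem side_ne_diag (he : e ∈ (F.quad i).sides) (j : Fin k) :
    e ≠ {(F.quad j).a, (F.quad j).b} := by
  rintro rfl
  obtain ⟨p, r, t, hpr, -, ht, hp, hr, hti⟩ := (F.quad i).exists_isTriangle_of_mem_sides he
  obtain rfl := F.eq_of_diag_subset ht hti (by rw [hpr]; simp [insert_subset_iff, hp, hr])
  exact (F.quad i).diag_not_mem_sides he

theorem eq_of_flipDiag_eq
    (h : ({(F.quad i).x, (F.quad i).y} : Finset (Fin N)) = {(F.quad j).x, (F.quad j).y}) :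
    i = j :=
  F.eq_of_diag_eq ((F.quad j).eq_ab_of_isEdge_of_interlaced_xy (F.quad i).isEdge_ab
    (h ▸ interlaced_comm.1 (F.quad i).interlaced_xy_ab))

theorem flipDiag_ne_diag (i j : Fin k) :
    ({(F.quad i).x, (F.quad i).y} : Finset (Fin N)) ≠ {(F.quad j).a, (F.quad j).b} :=
  fun h => (F.quad i).xy_not_mem_diags (h ▸ (F.quad j).diag_mem)

theorem not_interlaced_flipDiag (i j : Fin k) :
    ¬ Interlaced {(F.quad i).x, (F.quad i).y} {(F.quad j).x, (F.quad j).y} := by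
  rcases eq_or_ne i j with rfl | hij
  · exact not_interlaced_self _
  refine fun h => F.flipDiag_ne_diag i j ((F.quad j).eq_ab_of_interlaced_xy h fun s hs hc => ?_)
  obtain ⟨p, r, t, rfl, hpr, ht, hp, hr, -⟩ := (F.quad j).exists_isTriangle_of_mem_sides hs
  exact F.side_ne_diag hs i ((F.quad i).eq_ab_of_isEdge_of_interlaced_xy (ht.isEdge hp hr hpr)
    (interlaced_comm.1 hc))

def flipDiags (u : Fin k → Bool) : Finset (Finset (Fin N)) :=
  C.T.diags.filter (fun e => ∀ i, u i = true → e ≠ {(F.quad i).a, (F.quad i).b}) ∪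
    (univ.filter fun i => u i = true).image fun i => {(F.quad i).x, (F.quad i).y}

theorem mem_flipDiags :
    e ∈ F.flipDiags u ↔ (e ∈ C.T.diags ∧ ∀ i, u i = true → e ≠ {(F.quad i).a, (F.quad i).b}) ∨
      ∃ i, u i = true ∧ {(F.quad i).x, (F.quad i).y} = e := by
  simp [flipDiags]

theorem diag_mem_flipDiags_iff : {(F.quad i).a, (F.quad i).b} ∈ F.flipDiags u ↔ u i = false := by
  rw [mem_flipDiags]
  constructor
  · rintro (⟨-, h⟩ | ⟨j, -, h⟩)
    · by_contra hi
      exact h i (by simpa using hi) rfl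
    · exact absurd h (F.flipDiag_ne_diag j i)
  · refine fun hi => Or.inl ⟨(F.quad i).diag_mem, fun j hj h => ?_⟩
    obtain rfl := F.eq_of_diag_eq h
    simp [hi] at hj

theorem flipDiag_mem_flipDiags_iff :
    {(F.quad i).x, (F.quad i).y} ∈ F.flipDiags u ↔ u i = true := by
  rw [mem_flipDiags]
  constructor
  · rintro (⟨h, -⟩ | ⟨j, hj, h⟩)
    · exact absurd h (F.quad i).xy_not_mem_diags
    · rwa [← F.eq_of_flipDiag_eq h]
  · exact fun hi => Or.inr ⟨i, hi, rfl⟩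

theorem mem_flipDiags_of_mem_sides (hs : e ∈ (F.quad i).sides) (he : e ∈ C.T.diags) :
    e ∈ F.flipDiags u :=
  F.mem_flipDiags.2 (Or.inl ⟨he, fun j _ => F.side_ne_diag hs j⟩)

theorem not_interlaced_of_mem_flipDiags {e₁ e₂ : Finset (Fin N)} (h₁ : e₁ ∈ F.flipDiags u)
    (h₂ : e₂ ∈ F.flipDiags u) : ¬ Interlaced e₁ e₂ := by
  rw [mem_flipDiags] at h₁ h₂
  rcases h₁ with ⟨h₁, hn₁⟩ | ⟨i, hi, rfl⟩ <;> rcases h₂ with ⟨h₂, hn₂⟩ | ⟨j, hj, rfl⟩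
  · exact fun h => h.elim (C.T.noncross _ h₁ _ h₂) (C.T.noncross _ h₂ _ h₁)
  · obtain ⟨p, r, hpr, -, rfl⟩ := C.T.isDiag _ h₁
    exact fun h => hn₁ j hj ((F.quad j).eq_ab_of_isEdge_of_interlaced_xy ⟨hpr, Or.inr h₁⟩ h)
  · obtain ⟨p, r, hpr, -, rfl⟩ := C.T.isDiag _ h₂
    exact fun h => hn₂ i hi ((F.quad i).eq_ab_of_isEdge_of_interlaced_xy ⟨hpr, Or.inr h₂⟩
      (interlaced_comm.1 h))
  · exact F.not_interlaced_flipDiag i j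

theorem not_interlaced_sides (hnc : ∀ e' ∈ F.flipDiags u, ¬ Interlaced e e') (i : Fin k) :
    ∀ s ∈ (F.quad i).sides, ¬ Interlaced e s := by
  intro s hs
  obtain ⟨p, r, t, rfl, hpr, ht, hp, hr, -⟩ := (F.quad i).exists_isTriangle_of_mem_sides hs
  rcases (ht.isEdge hp hr hpr).2 with hb | hd
  · exact fun h => hb.not_interlaced e (interlaced_comm.1 h)
  · exact hnc _ (F.mem_flipDiags_of_mem_sides hs hd)

def flipT (u : Fin k → Bool) : Triangulation N where
  diags := F.flipDiags u
  isDiag e he := by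
    rcases F.mem_flipDiags.1 he with ⟨he, -⟩ | ⟨i, -, rfl⟩
    · exact C.T.isDiag e he
    · exact (F.quad i).isDiag_xy
  noncross _ h₁ _ h₂ h := F.not_interlaced_of_mem_flipDiags h₁ h₂ (Or.inl h)
  maximal e hdiag hnc' := by
    have hnc : ∀ e' ∈ F.flipDiags u, ¬ Interlaced e e' :=
      fun e' he' h => h.elim (hnc' e' he').1 (hnc' e' he').2
    by_cases he : e ∈ C.T.diags
    · refine F.mem_flipDiags.2 (Or.inl ⟨he, fun i hi hei => ?_⟩)
      subst hei
      exact hnc _ (F.flipDiag_mem_flipDiags_iff.2 hi)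
        (interlaced_comm.1 (F.quad i).interlaced_xy_ab)
    obtain ⟨d, hd, hed⟩ : ∃ d ∈ C.T.diags, Interlaced e d := by
      by_contra! h
      exact he (C.T.maximal e hdiag fun d hd => ⟨fun h' => h d hd (Or.inl h'),
        fun h' => h d hd (Or.inr h')⟩)
    obtain ⟨i, hi, rfl⟩ : ∃ i, u i = true ∧ d = {(F.quad i).a, (F.quad i).b} := by
      by_contra! h
      exact hnc d (F.mem_flipDiags.2 (Or.inl ⟨hd, h⟩)) hed
    exact F.mem_flipDiags.2 (Or.inr ⟨i, hi,
      ((F.quad i).eq_xy_of_interlaced_ab hed (F.not_interlaced_sides hnc i)).symm⟩)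

theorem eq_of_isNew (hi : (F.quad i).IsNew t) (hj : (F.quad j).IsNew t) : i = j :=
  F.eq_of_subset_verts hi.card_eq_three hi.subset_verts hj.subset_verts

theorem not_isNew_of_diag_subset (ht : IsTriangle C.T t)
    (hit : {(F.quad i).a, (F.quad i).b} ⊆ t) (j : Fin k) : ¬ (F.quad j).IsNew t := by
  intro hj
  obtain rfl := F.eq_of_subset_verts ht.card_eq_three
    ((F.quad i).subset_verts_of_isTriangle ht hit) hj.subset_verts
  exact (F.quad i).not_isNew_of_diag_subset hit hj

theorem flipDiags_update (u : Fin k → Bool) (i : Fin k) :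
    F.flipDiags (Function.update u i true) =
      insert {(F.quad i).x, (F.quad i).y} ((F.flipDiags u).erase {(F.quad i).a, (F.quad i).b}) := by
  have hupd : ∀ j, Function.update u i true j = true ↔ j = i ∨ u j = true := by
    intro j
    rcases eq_or_ne j i with rfl | hj <;> simp [*]
  ext e
  simp only [mem_insert, mem_erase, mem_flipDiags, hupd]
  constructor
  · rintro (⟨he, hn⟩ | ⟨j, hj | hj, rfl⟩)
    · exact Or.inr ⟨hn i (Or.inl rfl), Or.inl ⟨he, fun j hj => hn j (Or.inr hj)⟩⟩
    · exact Or.inl (by rw [hj])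
    · exact Or.inr ⟨F.flipDiag_ne_diag j i, Or.inr ⟨j, hj, rfl⟩⟩
  · rintro (rfl | ⟨hne, ⟨he, hn⟩ | ⟨j, hj, rfl⟩⟩)
    · exact Or.inr ⟨i, Or.inl rfl, rfl⟩
    · exact Or.inl ⟨he, fun j hj => hj.elim (· ▸ hne) (hn j)⟩
    · exact Or.inr ⟨j, Or.inr hj, rfl⟩

theorem isEdge_flipT (i : Fin k) (h : IsEdge C.T p r) (hs : {p, r} ∈ (F.quad i).sides) :
    IsEdge (F.flipT u) p r :=
  ⟨h.1, h.2.imp id (F.mem_flipDiags_of_mem_sides hs)⟩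

theorem isTriangle_abx_flipT (hi : u i = false) :
    IsTriangle (F.flipT u) {(F.quad i).a, (F.quad i).b, (F.quad i).x} :=
  ⟨_, _, _, (F.quad i).a_lt_b.ne, (F.quad i).a_lt_x.ne, (F.quad i).x_lt_b.ne', rfl,
    ⟨(F.quad i).a_lt_b.ne, Or.inr (F.diag_mem_flipDiags_iff.2 hi)⟩,
    F.isEdge_flipT i (F.quad i).isEdge_ax (by simp [Quad.sides]),
    (F.isEdge_flipT i (F.quad i).isEdge_bx.symm (by simp [Quad.sides])).symm⟩

theorem isTriangle_aby_flipT (hi : u i = false) :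
    IsTriangle (F.flipT u) {(F.quad i).a, (F.quad i).b, (F.quad i).y} :=
  ⟨_, _, _, (F.quad i).a_lt_b.ne, (F.quad i).y_ne_a.symm, (F.quad i).y_ne_b.symm, rfl,
    ⟨(F.quad i).a_lt_b.ne, Or.inr (F.diag_mem_flipDiags_iff.2 hi)⟩,
    F.isEdge_flipT i (F.quad i).isEdge_ay (by simp [Quad.sides]),
    F.isEdge_flipT i (F.quad i).isEdge_by (by simp [Quad.sides])⟩

theorem isTriangle_axy_flipT (hi : u i = true) :
    IsTriangle (F.flipT u) {(F.quad i).a, (F.quad i).x, (F.quad i).y} :=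
  ⟨_, _, _, (F.quad i).a_lt_x.ne, (F.quad i).y_ne_a.symm, (F.quad i).x_ne_y, rfl,
    F.isEdge_flipT i (F.quad i).isEdge_ax (by simp [Quad.sides]),
    F.isEdge_flipT i (F.quad i).isEdge_ay (by simp [Quad.sides]),
    ⟨(F.quad i).x_ne_y, Or.inr (F.flipDiag_mem_flipDiags_iff.2 hi)⟩⟩

theorem isTriangle_bxy_flipT (hi : u i = true) :
    IsTriangle (F.flipT u) {(F.quad i).b, (F.quad i).x, (F.quad i).y} :=
  ⟨_, _, _, (F.quad i).x_lt_b.ne', (F.quad i).y_ne_b.symm, (F.quad i).x_ne_y, rfl,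
    (F.isEdge_flipT i (F.quad i).isEdge_bx.symm (by simp [Quad.sides])).symm,
    F.isEdge_flipT i (F.quad i).isEdge_by (by simp [Quad.sides]),
    ⟨(F.quad i).x_ne_y, Or.inr (F.flipDiag_mem_flipDiags_iff.2 hi)⟩⟩

theorem not_isTriangle_flipT_of_isNew (hi : u i = false) (ht : (F.quad i).IsNew t) :
    ¬ IsTriangle (F.flipT u) t := by
  intro h
  have hx : (F.quad i).x ∈ t := by rcases ht with rfl | rfl <;> simp
  have hy : (F.quad i).y ∈ t := by rcases ht with rfl | rfl <;> simp
  rcases (h.isEdge hx hy (F.quad i).x_ne_y).2 with hb | hd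
  · exact (F.quad i).not_isEdge_xy ⟨(F.quad i).x_ne_y, Or.inl hb⟩
  · exact absurd (F.flipDiag_mem_flipDiags_iff.1 hd) (by simp [hi])

theorem flipT_injective : Function.Injective F.flipT := by
  intro u v h
  funext i
  have hmem := congrArg ({(F.quad i).x, (F.quad i).y} ∈ Triangulation.diags ·) h
  simp only [flipT, flipDiag_mem_flipDiags_iff, eq_iff_iff] at hmem
  exact Bool.eq_iff_iff.2 hmem

variable [NeZero m] (σ : Equiv.Perm (Fin m))

def quadCol (i : Fin k) : Fin m := C.col ⟨_, (F.quad i).isTriangle_abx⟩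

open Classical in
/-- `0` is a junk value: it is only taken on sets that are neither old nor new triangles. -/
noncomputable def flipCol (u : Fin k → Bool) (t : Finset (Fin N)) : Fin m :=
  if h : ∃ i, u i = true ∧ (F.quad i).IsNew t then σ (F.quadCol h.choose)
  else if ht : IsTriangle C.T t then C.col ⟨t, ht⟩ else 0

noncomputable def flip (u : Fin k → Bool) : ColouredTri N m := ⟨F.flipT u, fun t => F.flipCol σ u t⟩

theorem flipCol_of_isNew (hi : u i = true) (ht : (F.quad i).IsNew t) :
    F.flipCol σ u t = σ (F.quadCol i) := by
  have h : ∃ j, u j = true ∧ (F.quad j).IsNew t := ⟨i, hi, ht⟩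
  rw [flipCol, dif_pos h, F.eq_of_isNew h.choose_spec.2 ht]

theorem flipCol_of_not_isNew (hn : ∀ i, u i = true → ¬ (F.quad i).IsNew t)
    (ht : IsTriangle C.T t) : F.flipCol σ u t = C.col ⟨t, ht⟩ := by
  rw [flipCol, dif_neg fun ⟨i, hi, hn'⟩ => hn i hi hn', dif_pos ht]

theorem sFlipAt_flip (hi : u i = false) :
    SFlipAt σ {(F.quad i).a, (F.quad i).b} (F.flip σ u) (F.flip σ (Function.update u i true)) := by
  have hi' : Function.update u i true i = true := by simp
  have habx : ∀ j, u j = true → ¬ (F.quad j).IsNew {(F.quad i).a, (F.quad i).b, (F.quad i).x} :=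
    fun j _ => F.not_isNew_of_diag_subset (i := i) (F.quad i).isTriangle_abx
      (by simp [insert_subset_iff]) j
  have haby : ∀ j, u j = true → ¬ (F.quad j).IsNew {(F.quad i).a, (F.quad i).b, (F.quad i).y} :=
    fun j _ => F.not_isNew_of_diag_subset (i := i) (F.quad i).isTriangle_aby
      (by simp [insert_subset_iff]) j
  refine ⟨_, _, _, _, F.isTriangle_abx_flipT hi, F.isTriangle_aby_flipT hi,
    F.isTriangle_axy_flipT hi', F.isTriangle_bxy_flipT hi', rfl, F.diag_mem_flipDiags_iff.2 hi,
    (F.quad i).x_ne_y, ?_, F.flipDiags_update u i, ?_, ?_, ?_⟩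
  · show F.flipCol σ u _ = F.flipCol σ u _
    rw [F.flipCol_of_not_isNew σ habx (F.quad i).isTriangle_abx,
      F.flipCol_of_not_isNew σ haby (F.quad i).isTriangle_aby]
    exact F.col_eq i
  · show F.flipCol σ _ _ = σ (F.flipCol σ u _)
    rw [F.flipCol_of_isNew σ hi' (Or.inl rfl),
      F.flipCol_of_not_isNew σ habx (F.quad i).isTriangle_abx, quadCol]
  · show F.flipCol σ _ _ = σ (F.flipCol σ u _)
    rw [F.flipCol_of_isNew σ hi' (Or.inr rfl),
      F.flipCol_of_not_isNew σ habx (F.quad i).isTriangle_abx, quadCol]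
  · rintro t ht ht' - -
    show F.flipCol σ _ t = F.flipCol σ u t
    by_cases hnew : ∃ j, u j = true ∧ (F.quad j).IsNew t
    · obtain ⟨j, hj, hn⟩ := hnew
      rw [F.flipCol_of_isNew σ hj hn,
        F.flipCol_of_isNew σ (by simp [Function.update_apply, hj]) hn]
    · have hnew' : ¬ ∃ j, Function.update u i true j = true ∧ (F.quad j).IsNew t := by
        rintro ⟨j, hj, hn⟩
        rcases eq_or_ne j i with rfl | hji
        · exact F.not_isTriangle_flipT_of_isNew hi hn ht
        · exact hnew ⟨j, by simpa [hji] using hj, hn⟩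
      rw [flipCol, flipCol, dif_neg hnew', dif_neg hnew]

theorem flip_injective : Function.Injective (F.flip σ) :=
  fun _ _ h => F.flipT_injective (congrArg ColouredTri.T h)

theorem flip_false : F.flip σ (fun _ => false) = C :=
  ColouredTri.ext_of_diags (by ext; simp [flip, flipT, mem_flipDiags])
    fun _ _ h => F.flipCol_of_not_isNew σ (by simp) h

end DisjointQuads

namespace DisjointQuads

variable {k : ℕ} {C : ColouredTri N 2} (F : DisjointQuads C k)

theorem flip_adj {u v : Fin k → Bool} (h : cubeAdj k u v) :
    (flipGraph N).Adj (F.flip (finRotate 2) u) (F.flip (finRotate 2) v) := by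
  obtain ⟨i, hi, hrest⟩ := h
  refine ⟨fun h => hi (congrFun (F.flip_injective _ h) i), ?_⟩
  have hupd : ∀ {u v : Fin k → Bool}, (∀ j, u j ≠ v j → j = i) → v i = true →
      v = Function.update u i true := fun hr hv => Function.eq_update_iff.2
    ⟨hv, fun j hj => by_contra fun h => hj (hr j (Ne.symm h))⟩
  cases hu : u i <;> cases hv : v i <;> simp only [hu, hv, ne_eq, not_true] at hi
  · left
    rw [hupd hrest hv]
    exact ⟨_, F.sFlipAt_flip _ hu⟩
  · right
    rw [hupd (fun j hj => hrest j (Ne.symm hj)) hu]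
    exact ⟨_, F.sFlipAt_flip _ hv⟩

theorem cubeEmb_flip : CubeEmb C k (F.flip (finRotate 2)) :=
  ⟨F.flip_injective _, fun _ _ => F.flip_adj, fun u => by
    have h : (flipGraph N).Reachable (F.flip _ fun _ => false) (F.flip _ u) :=
      (cubeGraph_reachable _ u).map (⟨_, F.flip_adj⟩ : cubeGraph k →g flipGraph N)
    rwa [F.flip_false] at h⟩

end DisjointQuads

theorem hypercube_from_disjoint_flips_general {N : ℕ} (k : ℕ)
    (C : ColouredTri N 2) (D t₁ t₂ : Fin k → Finset (Fin N))
    (ht₁ : ∀ i, IsTriangle C.T (t₁ i)) (ht₂ : ∀ i, IsTriangle C.T (t₂ i))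
    (hD : ∀ i, D i ∈ C.T.diags ∧ D i ⊆ t₁ i ∧ D i ⊆ t₂ i ∧ t₁ i ≠ t₂ i)
    (hcol : ∀ i, C.col ⟨t₁ i, ht₁ i⟩ = C.col ⟨t₂ i, ht₂ i⟩)
    (hdisj : ∀ i j, i ≠ j → ((t₁ i ∪ t₂ i) ∩ (t₁ j ∪ t₂ j)).card ≤ 2) :
    ∃ f : (Fin k → Bool) → ColouredTri N 2, CubeEmb C k f := by
  choose q hverts htri using fun i => Quad.exists_of_isTriangle (hD i).1 (ht₁ i) (ht₂ i)
    (hD i).2.1 (hD i).2.2.1 (hD i).2.2.2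
  have hcol' : ∀ i, C.col ⟨_, (q i).isTriangle_abx⟩ = C.col ⟨_, (q i).isTriangle_aby⟩ := by
    intro i
    rcases htri i with ⟨h₁, h₂⟩ | ⟨h₁, h₂⟩
    · exact (C.col_congr h₁.symm _ _).trans ((hcol i).trans (C.col_congr h₂ _ _))
    · exact (C.col_congr h₂.symm _ _).trans ((hcol i).symm.trans (C.col_congr h₁ _ _))
  let F : DisjointQuads C k := ⟨q, hcol', fun i j hij => hverts i ▸ hverts j ▸ hdisj i j hij⟩
  exact ⟨_, F.cubeEmb_flip⟩

/-- If a 2-coloured triangulation has `k > 1` flippable diagonals whose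
quadrilaterals are pairwise disjoint (sharing at most a diagonal), then its
connected component in the 2-coloured flip graph contains a `k`-dimensional
hypercube. -/
theorem hypercube_from_disjoint_flips {N : ℕ} (k : ℕ) (hk : 1 < k)
    (C : ColouredTri N 2) (D t₁ t₂ : Fin k → Finset (Fin N))
    (ht₁ : ∀ i, IsTriangle C.T (t₁ i)) (ht₂ : ∀ i, IsTriangle C.T (t₂ i))
    (hD : ∀ i, D i ∈ C.T.diags ∧ D i ⊆ t₁ i ∧ D i ⊆ t₂ i ∧ t₁ i ≠ t₂ i)
    (hcol : ∀ i, C.col ⟨t₁ i, ht₁ i⟩ = C.col ⟨t₂ i, ht₂ i⟩)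
    (hdisj : ∀ i j, i ≠ j → ((t₁ i ∪ t₂ i) ∩ (t₁ j ∪ t₂ j)).card ≤ 2) :
    ∃ f : (Fin k → Bool) → ColouredTri N 2, CubeEmb C k f :=
  hypercube_from_disjoint_flips_general k C D t₁ t₂ ht₁ ht₂ hD hcol hdisj

end PolyFlip
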